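/- arXiv:2407.03659 — 6 statements merged into one kernel-verified Lean document; each statement's English description precedes it below -/
import Mathlib

section
/- Let ρ₁ > −1 and ρ₂ > 0 be real constants. For every absolutely continuous function f on [0,1] with f(0) = 0 and ∫₀¹ (f′(x))² dx ≤ 1, the quantity ρ₂⁻¹ ∫₀¹ x^{(1+ρ₁−ρ₂)/ρ₂} f(x) dx is at most √2 · ((1+ρ₁+ρ₂)(2+2ρ₁+ρ₂))^{−1/2}, and this bound is attained by the function f with f(0)=0 and f′(t) = (1 − t^{(1+ρ₁)/ρ₂}) / (∫₀¹ (1 − x^{(1+ρ₁)/ρ₂})² dx)^{1/2}. -/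
open MeasureTheory Filter Real intervalIntegral

/-! With `β = (1 + ρ₁) / ρ₂`, Fubini on the triangle `t ≤ x` turns the functional into
`ρ₂⁻¹ ∫₀¹ φ g` with `φ t = (1 - t ^ β) / β`. Cauchy–Schwarz bounds this by `ρ₂⁻¹ ‖φ‖₂`, with
equality for `g = φ / ‖φ‖₂`, the stated extremal function; and `‖φ‖₂²` is an explicit
integral of powers. -/

theorem intervalIntegral.integral_mul_integral_eq_integral_integral_mul {a b : ℝ} (hab : a ≤ b)
    {w g : ℝ → ℝ} (hw : IntervalIntegrable w volume a b) (hg : IntervalIntegrable g volume a b) :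
    ∫ x in a..b, w x * ∫ t in a..x, g t = ∫ t in a..b, (∫ x in t..b, w x) * g t := by
  set μ : Measure ℝ := volume.restrict (Set.Ioc a b)
  have hwI := (intervalIntegrable_iff_integrableOn_Ioc_of_le hab).mp hw
  have hgI := (intervalIntegrable_iff_integrableOn_Ioc_of_le hab).mp hg
  set F : ℝ × ℝ → ℝ := {p : ℝ × ℝ | p.2 ≤ p.1}.indicator fun p => w p.1 * g p.2
  have hF : Integrable F (μ.prod μ) := by
    have hprod : Integrable (fun p : ℝ × ℝ => w p.1 * g p.2) (μ.prod μ) := hwI.mul_prod hgI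
    exact hprod.indicator (measurableSet_le measurable_snd measurable_fst)
  have hinner : ∀ x ∈ Set.Ioc a b, ∫ t, F (x, t) ∂μ = w x * ∫ t in a..x, g t := by
    intro x hx
    have hset : Set.Iic x ∩ Set.Ioc a b = Set.Ioc a x :=
      Set.ext fun t => ⟨fun h => ⟨h.2.1, h.1⟩, fun h => ⟨h.2, h.1, h.2.trans hx.2⟩⟩
    have hfun : (fun t => F (x, t)) = (Set.Iic x).indicator fun t => w x * g t := by
      ext t; simp [F, Set.indicator_apply]
    rw [hfun, MeasureTheory.integral_indicator measurableSet_Iic,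
      Measure.restrict_restrict measurableSet_Iic, hset, MeasureTheory.integral_const_mul,
      integral_of_le hx.1.le]
  have houter : ∀ t ∈ Set.Ioc a b, ∫ x, F (x, t) ∂μ = (∫ x in t..b, w x) * g t := by
    intro t ht
    have hset : Set.Ici t ∩ Set.Ioc a b = Set.Icc t b :=
      Set.ext fun x => ⟨fun h => ⟨h.1, h.2.2⟩, fun h => ⟨h.1, ht.1.trans_le h.1, h.2⟩⟩
    have hfun : (fun x => F (x, t)) = (Set.Ici t).indicator fun x => w x * g t := by
      ext x; simp [F, Set.indicator_apply]
    rw [hfun, MeasureTheory.integral_indicator measurableSet_Ici,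
      Measure.restrict_restrict measurableSet_Ici, hset, MeasureTheory.integral_mul_const,
      integral_Icc_eq_integral_Ioc, integral_of_le ht.2]
  calc ∫ x in a..b, w x * ∫ t in a..x, g t
      = ∫ x, ∫ t, F (x, t) ∂μ ∂μ := by
        rw [integral_of_le hab]; exact (setIntegral_congr_fun measurableSet_Ioc hinner).symm
    _ = ∫ t, ∫ x, F (x, t) ∂μ ∂μ := integral_integral_swap hF
    _ = ∫ t in a..b, (∫ x in t..b, w x) * g t := by
        rw [integral_of_le hab]; exact setIntegral_congr_fun measurableSet_Ioc houter

theorem MeasureTheory.integral_mul_le_sqrt_mul_sqrt {α : Type*} [MeasurableSpace α]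
    {μ : Measure α} {f g : α → ℝ} (hf : MemLp f 2 μ) (hg : MemLp g 2 μ) :
    ∫ x, f x * g x ∂μ ≤ √(∫ x, f x ^ 2 ∂μ) * √(∫ x, g x ^ 2 ∂μ) := by
  have hsq : ∀ u : ℝ, ‖u‖ ^ (2 : ℝ) = u ^ 2 := fun u => by rw [rpow_two, norm_eq_abs, sq_abs]
  calc ∫ x, f x * g x ∂μ ≤ ∫ x, ‖f x‖ * ‖g x‖ ∂μ := by
        simpa only [norm_mul, norm_eq_abs] using
          (le_abs_self _).trans (norm_integral_le_integral_norm fun x => f x * g x)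
    _ ≤ (∫ x, ‖f x‖ ^ (2 : ℝ) ∂μ) ^ (1 / (2 : ℝ)) * (∫ x, ‖g x‖ ^ (2 : ℝ) ∂μ) ^ (1 / (2 : ℝ)) :=
        integral_mul_norm_le_Lp_mul_Lq .two_two (by simpa using hf) (by simpa using hg)
    _ = √(∫ x, f x ^ 2 ∂μ) * √(∫ x, g x ^ 2 ∂μ) := by simp only [hsq, sqrt_eq_rpow]

theorem intervalIntegral.integral_mul_le_sqrt_mul_sqrt {a b : ℝ} (hab : a ≤ b) {f g : ℝ → ℝ}
    (hf : IntervalIntegrable f volume a b) (hf2 : IntervalIntegrable (fun x => f x ^ 2) volume a b)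
    (hg : IntervalIntegrable g volume a b)
    (hg2 : IntervalIntegrable (fun x => g x ^ 2) volume a b) :
    ∫ x in a..b, f x * g x ≤ √(∫ x in a..b, f x ^ 2) * √(∫ x in a..b, g x ^ 2) := by
  have memLp {u : ℝ → ℝ} (hu : IntervalIntegrable u volume a b)
      (hu2 : IntervalIntegrable (fun x => u x ^ 2) volume a b) :
      MemLp u 2 (volume.restrict (Set.Ioc a b)) :=
    (memLp_two_iff_integrable_sq
      ((intervalIntegrable_iff_integrableOn_Ioc_of_le hab).1 hu).aestronglyMeasurable).2 hu2.1
  simp only [integral_of_le hab]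
  exact MeasureTheory.integral_mul_le_sqrt_mul_sqrt (memLp hf hf2) (memLp hg hg2)

theorem intervalIntegral.integral_mul_div_sqrt_integral_sq (a b : ℝ) (f : ℝ → ℝ) :
    ∫ x in a..b, f x * (f x / √(∫ x in a..b, f x ^ 2)) = √(∫ x in a..b, f x ^ 2) := by
  simp only [mul_div_assoc', ← sq, intervalIntegral.integral_div, div_sqrt]

theorem integral_one_sub_rpow_sq {b : ℝ} (hb : -1 / 2 < b) :
    ∫ y in (0 : ℝ)..1, (1 - y ^ b) ^ 2 = 2 * b ^ 2 / ((b + 1) * (2 * b + 1)) := by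
  have hb1 : -1 < b := by linarith
  have hb2 : -1 < 2 * b := by linarith
  have hexpand : ∀ y ∈ Set.uIcc (0 : ℝ) 1, (1 - y ^ b) ^ 2 = 1 - 2 * y ^ b + y ^ (2 * b) := by
    intro y hy
    rw [Set.uIcc_of_le zero_le_one] at hy
    rw [mul_comm 2 b, rpow_mul hy.1, rpow_two]
    ring
  have hrpow := intervalIntegrable_rpow' (a := 0) (b := 1) hb1
  rw [integral_congr hexpand, integral_add (intervalIntegrable_const.sub (hrpow.const_mul 2))
      (intervalIntegrable_rpow' hb2), integral_sub intervalIntegrable_const (hrpow.const_mul 2),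
    intervalIntegral.integral_const_mul, integral_rpow (Or.inl hb1), integral_rpow (Or.inl hb2)]
  simp only [intervalIntegral.integral_const, smul_eq_mul, one_rpow,
    zero_rpow (by linarith : b + 1 ≠ 0), zero_rpow (by linarith : 2 * b + 1 ≠ 0)]
  field_simp [(by linarith : b + 1 ≠ 0), (by linarith : 2 * b + 1 ≠ 0)]
  ring

theorem sqrt_integral_one_sub_rpow_sq_div {b : ℝ} (hb : 0 < b) :
    √(∫ y in (0 : ℝ)..1, (1 - y ^ b) ^ 2) / b = √2 / √((b + 1) * (2 * b + 1)) := by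
  rw [integral_one_sub_rpow_sq (by linarith), sqrt_div' _ (by positivity), sqrt_mul zero_le_two,
    sqrt_sq hb.le]
  field_simp

theorem integral_one_sub_rpow_mul_le {β : ℝ} (hβ : 0 ≤ β) {g : ℝ → ℝ}
    (hg : IntervalIntegrable g volume 0 1) (hg2 : IntervalIntegrable (fun t => g t ^ 2) volume 0 1)
    (hg_le : ∫ t in (0 : ℝ)..1, g t ^ 2 ≤ 1) :
    ∫ t in (0 : ℝ)..1, (1 - t ^ β) * g t ≤ √(∫ t in (0 : ℝ)..1, (1 - t ^ β) ^ 2) := by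
  have hcont : Continuous fun t : ℝ => 1 - t ^ β := continuous_const.sub (continuous_rpow_const hβ)
  calc ∫ t in (0 : ℝ)..1, (1 - t ^ β) * g t
      ≤ √(∫ t in (0 : ℝ)..1, (1 - t ^ β) ^ 2) * √(∫ t in (0 : ℝ)..1, g t ^ 2) :=
        integral_mul_le_sqrt_mul_sqrt zero_le_one (hcont.intervalIntegrable 0 1)
          ((hcont.pow 2).intervalIntegrable 0 1) hg hg2
    _ ≤ √(∫ t in (0 : ℝ)..1, (1 - t ^ β) ^ 2) :=
        mul_le_of_le_one_right (sqrt_nonneg _) (sqrt_le_one.2 hg_le)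

/-- Strassen-class bound: for every absolutely continuous `f` on `[0,1]` with
`f 0 = 0` (written as `f x = ∫ t in 0..x, g t` for the derivative `g`) and
`∫₀¹ g² ≤ 1`, the functional `ρ₂⁻¹ ∫₀¹ x^{(1+ρ₁-ρ₂)/ρ₂} f(x) dx` is at most
`√2 ((1+ρ₁+ρ₂)(2+2ρ₁+ρ₂))^{-1/2}`, and the bound is attained at the stated
extremal function. -/
theorem stmt2 (ρ₁ ρ₂ : ℝ) (h1 : -1 < ρ₁) (h2 : 0 < ρ₂) :
    (∀ g : ℝ → ℝ, IntervalIntegrable g volume 0 1 →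
      IntervalIntegrable (fun t => (g t) ^ 2) volume 0 1 →
      (∫ t in (0:ℝ)..1, (g t) ^ 2) ≤ 1 →
      ρ₂⁻¹ * ∫ x in (0:ℝ)..1, x ^ ((1 + ρ₁ - ρ₂) / ρ₂) * (∫ t in (0:ℝ)..x, g t)
        ≤ Real.sqrt 2 / Real.sqrt ((1 + ρ₁ + ρ₂) * (2 + 2 * ρ₁ + ρ₂))) ∧
    (ρ₂⁻¹ * ∫ x in (0:ℝ)..1, x ^ ((1 + ρ₁ - ρ₂) / ρ₂) *
        (∫ t in (0:ℝ)..x, (1 - t ^ ((1 + ρ₁) / ρ₂)) /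
          Real.sqrt (∫ y in (0:ℝ)..1, (1 - y ^ ((1 + ρ₁) / ρ₂)) ^ 2))
      = Real.sqrt 2 / Real.sqrt ((1 + ρ₁ + ρ₂) * (2 + 2 * ρ₁ + ρ₂))) := by
  have hexp : (1 + ρ₁ - ρ₂) / ρ₂ + 1 = (1 + ρ₁) / ρ₂ := by field_simp; ring
  set β := (1 + ρ₁) / ρ₂
  have hβ : 0 < β := div_pos (by linarith) h2
  have hreduce (g : ℝ → ℝ) (hg : IntervalIntegrable g volume 0 1) :
      ∫ x in (0:ℝ)..1, x ^ ((1 + ρ₁ - ρ₂) / ρ₂) * (∫ t in (0:ℝ)..x, g t)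
        = (∫ t in (0:ℝ)..1, (1 - t ^ β) * g t) / β := by
    rw [integral_mul_integral_eq_integral_integral_mul zero_le_one
      (intervalIntegrable_rpow' (by linarith)) hg, ← intervalIntegral.integral_div]
    simp only [integral_rpow (Or.inl (by linarith : -1 < (1 + ρ₁ - ρ₂) / ρ₂)), one_rpow, hexp,
      div_mul_eq_mul_div]
  have hvalue : ρ₂⁻¹ * (√(∫ y in (0:ℝ)..1, (1 - y ^ β) ^ 2) / β)
      = √2 / √((1 + ρ₁ + ρ₂) * (2 + 2 * ρ₁ + ρ₂)) := by
    have hβρ : (1 + ρ₁ + ρ₂) * (2 + 2 * ρ₁ + ρ₂) = ρ₂ ^ 2 * ((β + 1) * (2 * β + 1)) := by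
      simp only [β]; field_simp
    rw [sqrt_integral_one_sub_rpow_sq_div hβ, hβρ, sqrt_mul (sq_nonneg _), sqrt_sq h2.le]
    field_simp
  refine ⟨fun g hg hg2 hg_le => ?_, ?_⟩
  · rw [hreduce g hg, ← hvalue]
    gcongr
    exact integral_one_sub_rpow_mul_le hβ.le hg hg2 hg_le
  · have hcont : Continuous fun t : ℝ => 1 - t ^ β :=
      continuous_const.sub (continuous_rpow_const hβ.le)
    rw [hreduce _ ((hcont.div_const _).intervalIntegrable _ _), integral_mul_div_sqrt_integral_sq,
      hvalue]
end

section
/- Let p ∈ [0,1/2), â_n = Γ(n)Γ(1+p)/Γ(n+p), and ŝ_n² = Σ_{k=1}^n â_k². Then â_n/ŝ_n = √(1−2p)·n^{−1/2}·(1 + O(n^{2p−1})) as n → ∞. -/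
/-!
From `â (n+1) = â n · n / (n + p)`, summation by parts gives `(1 - 2p) ŝ_n² = n â_n² + O(1)`.
Log-convexity of `Γ` gives `Γ(n + p) ≤ Γ(n) n^p`, i.e. `â_n ≥ Γ(1 + p) n^{-p}`, so `n â_n²` grows
like `n^{1-2p}` and the relative error in `n â_n² ≈ (1 - 2p) ŝ_n²` is `O(n^{2p-1})`; taking square
roots gives the claim.
-/

open Filter Real Finset

theorem Real.Gamma_add_le_Gamma_mul_rpow {x p : ℝ} (hx : 0 < x) (hp0 : 0 ≤ p) (hp1 : p ≤ 1) :
    Gamma (x + p) ≤ Gamma x * x ^ p := by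
  have hconv := convexOn_log_Gamma.2 (Set.mem_Ioi.2 hx) (Set.mem_Ioi.2 (by linarith : 0 < x + 1))
    (sub_nonneg.2 hp1) hp0 (sub_add_cancel 1 p)
  have harg : (1 - p) * x + p * (x + 1) = x + p := by ring
  simp only [smul_eq_mul, Function.comp_apply, Gamma_add_one hx.ne',
    log_mul hx.ne' (Gamma_pos_of_pos hx).ne', harg] at hconv
  rw [← log_le_log_iff (Gamma_pos_of_pos (by linarith)) (by positivity),
    log_mul (Gamma_pos_of_pos hx).ne' (by positivity), log_rpow hx]
  linarith

theorem Real.Gamma_one_add_sq_mul_rpow_le {x p : ℝ} (hx : 0 < x) (hp0 : 0 ≤ p) (hp1 : p ≤ 1) :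
    Gamma (1 + p) ^ 2 * x ^ (1 - 2 * p) ≤ x * (Gamma x * Gamma (1 + p) / Gamma (x + p)) ^ 2 := by
  have hratio : Gamma (1 + p) * x ^ (-p) ≤ Gamma x * Gamma (1 + p) / Gamma (x + p) := by
    rw [le_div_iff₀ (Gamma_pos_of_pos (by linarith)), rpow_neg hx.le]
    calc Gamma (1 + p) * (x ^ p)⁻¹ * Gamma (x + p)
        ≤ Gamma (1 + p) * (x ^ p)⁻¹ * (Gamma x * x ^ p) := by
          have := Gamma_pos_of_pos (by linarith : 0 < 1 + p)
          gcongr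
          exact Gamma_add_le_Gamma_mul_rpow hx hp0 hp1
      _ = Gamma x * Gamma (1 + p) := by
          have : x ^ p ≠ 0 := (rpow_pos_of_pos hx p).ne'
          field_simp
  have hpow : x ^ (1 - 2 * p) = x * (x ^ (-p)) ^ 2 := by
    rw [sq, ← rpow_add hx, show 1 - 2 * p = 1 + (-p + -p) by ring, rpow_add hx, rpow_one]
  rw [hpow, mul_left_comm, ← mul_pow]
  have := Gamma_pos_of_pos (by linarith : 0 < 1 + p)
  gcongr

theorem Real.Gamma_ratio_add_one {x p : ℝ} (hx : 0 < x) (hxp : 0 < x + p) :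
    Gamma (x + 1) * Gamma (1 + p) / Gamma (x + 1 + p) =
      Gamma x * Gamma (1 + p) / Gamma (x + p) * (x / (x + p)) := by
  rw [add_right_comm, Gamma_add_one hx.ne', Gamma_add_one hxp.ne']
  have := (Gamma_pos_of_pos hxp).ne'
  field_simp

section Recurrence

variable {p : ℝ} {a : ℕ → ℝ}

theorem pos_of_succ_eq_mul (hp : 0 ≤ p) (ha1 : a 1 = 1)
    (hrec : ∀ n, 1 ≤ n → a (n + 1) = a n * (n / (n + p))) {n : ℕ} (hn : 1 ≤ n) : 0 < a n := by
  induction n, hn using Nat.le_induction with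
  | base => rw [ha1]; exact one_pos
  | succ m hm ih =>
    have : (0 : ℝ) < m := by exact_mod_cast hm
    rw [hrec m hm]; positivity

theorem le_one_of_succ_eq_mul (hp : 0 ≤ p) (ha1 : a 1 = 1)
    (hrec : ∀ n, 1 ≤ n → a (n + 1) = a n * (n / (n + p))) {n : ℕ} (hn : 1 ≤ n) : a n ≤ 1 := by
  induction n, hn using Nat.le_induction with
  | base => rw [ha1]
  | succ m hm ih =>
    have : (0 : ℝ) < m := by exact_mod_cast hm
    rw [hrec m hm]
    exact mul_le_one₀ ih (by positivity) (div_le_one_of_le₀ (by linarith) (by positivity))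

/- Summation by parts: the shift `3p/2` makes the `1/n`-term in the increment of
`(n + 3p/2) a(n+1)²` cancel, leaving `(1 - 2p) a(n+1)²` plus the summable term
`(p³/2) a(n+1)² / (n + 1 + p)²`. -/
theorem one_sub_two_mul_sum_sq_eq (hp : 0 ≤ p) (ha1 : a 1 = 1)
    (hrec : ∀ n, 1 ≤ n → a (n + 1) = a n * (n / (n + p))) (n : ℕ) :
    (1 - 2 * p) * ∑ k ∈ Icc 1 n, a k ^ 2 =
      (n + 3 * p / 2) * a (n + 1) ^ 2 - 3 * p / 2
        - p ^ 3 / 2 * ∑ k ∈ Icc 1 n, a k ^ 2 / (k + p) ^ 2 := by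
  induction n with
  | zero => simp [ha1]
  | succ m ih =>
    rw [sum_Icc_succ_top (by omega), sum_Icc_succ_top (by omega), hrec (m + 1) (by omega),
      mul_add, ih]
    have : ((m : ℝ) + 1 + p) ≠ 0 := by positivity
    push_cast
    field_simp
    ring

theorem sum_sq_div_add_sq_le_two (hp : 0 ≤ p) (ha1 : a 1 = 1)
    (hrec : ∀ n, 1 ≤ n → a (n + 1) = a n * (n / (n + p))) (n : ℕ) :
    ∑ k ∈ Icc 1 n, a k ^ 2 / (k + p) ^ 2 ≤ 2 := by
  calc ∑ k ∈ Icc 1 n, a k ^ 2 / (k + p) ^ 2 ≤ ∑ k ∈ Ioo 0 (n + 1), ((k : ℝ) ^ 2)⁻¹ := by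
        rw [show Ioo 0 (n + 1) = Icc 1 n by ext; simp; omega]
        refine sum_le_sum fun k hk => ?_
        have hk1 : 1 ≤ k := (mem_Icc.1 hk).1
        have hk : (0 : ℝ) < k := by exact_mod_cast hk1
        rw [← one_div]
        gcongr
        · exact pow_le_one₀ (pos_of_succ_eq_mul hp ha1 hrec hk1).le
            (le_one_of_succ_eq_mul hp ha1 hrec hk1)
        · linarith
    _ ≤ 2 / ((0 : ℕ) + 1) := sum_Ioo_inv_sq_le 0 (n + 1)
    _ = 2 := by norm_num

theorem abs_one_sub_two_mul_sum_sq_sub_le (hp : 0 ≤ p) (ha1 : a 1 = 1)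
    (hrec : ∀ n, 1 ≤ n → a (n + 1) = a n * (n / (n + p))) {n : ℕ} (hn : 1 ≤ n) :
    |(1 - 2 * p) * ∑ k ∈ Icc 1 n, a k ^ 2 - n * a n ^ 2| ≤ 2 * p + p ^ 3 := by
  have hq : (0 : ℝ) < n := by exact_mod_cast hn
  have hA0 := pos_of_succ_eq_mul hp ha1 hrec hn
  have hA1 := le_one_of_succ_eq_mul hp ha1 hrec hn
  set R := ∑ k ∈ Icc 1 n, a k ^ 2 / (k + p) ^ 2
  have hshift : (n + 3 * p / 2) * a (n + 1) ^ 2 - n * a n ^ 2 =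
      -(a n ^ 2 * (n * (p * n / 2 + p ^ 2) / (n + p) ^ 2)) := by
    rw [hrec n hn]
    field_simp
    ring
  set E := a n ^ 2 * (n * (p * n / 2 + p ^ 2) / (n + p) ^ 2)
  have hfrac : n * (p * n / 2 + p ^ 2) / (n + p) ^ 2 ≤ p / 2 := by
    rw [div_le_iff₀ (by positivity)]
    nlinarith [pow_nonneg hp 3]
  have hE0 : 0 ≤ E := by positivity
  have hE : E ≤ p / 2 :=
    (mul_le_of_le_one_left (by positivity) (pow_le_one₀ hA0.le hA1)).trans hfrac
  have hR0 : 0 ≤ p ^ 3 / 2 * R := by positivity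
  have hR : p ^ 3 / 2 * R ≤ p ^ 3 := by
    nlinarith [sum_sq_div_add_sq_le_two hp ha1 hrec n, pow_nonneg hp 3]
  rw [one_sub_two_mul_sum_sq_eq hp ha1 hrec n, abs_le]
  constructor <;> linarith

end Recurrence

theorem abs_sqrt_sub_one_le {t : ℝ} (ht : 0 ≤ t) : |√t - 1| ≤ |t - 1| := by
  have h : t - 1 = (√t - 1) * (√t + 1) := by
    nth_rw 1 [← sq_sqrt ht]; ring
  rw [h, abs_mul, abs_of_pos (by positivity : 0 < √t + 1)]
  exact le_mul_of_one_le_right (abs_nonneg _) (by linarith [sqrt_nonneg t])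

theorem div_sqrt_div_mul_rpow_neg_half {u q S t : ℝ} (hu : 0 ≤ u) (hq : 0 ≤ q) (ht : 0 < t) :
    u / √S / (√q * t ^ (-(1:ℝ) / 2)) = √(t * u ^ 2 / (q * S)) := by
  rw [sqrt_div (by positivity), sqrt_mul hq, sqrt_mul ht.le, sqrt_sq hu, neg_div, rpow_neg ht.le,
    ← sqrt_eq_rpow]
  have := sqrt_pos.2 ht
  field_simp

theorem abs_sqrt_div_sub_one_le {x y : ℝ} (hx : 0 < x) (hxy : |y - x| ≤ x / 2) :
    |√(x / y) - 1| ≤ 2 * |y - x| / x := by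
  have hy : x / 2 ≤ y := by linarith [(abs_le.1 hxy).1]
  have hy0 : 0 < y := by linarith
  calc |√(x / y) - 1| ≤ |x / y - 1| := abs_sqrt_sub_one_le (by positivity)
    _ = |y - x| / y := by rw [div_sub_one hy0.ne', abs_div, abs_of_pos hy0, abs_sub_comm]
    _ ≤ |y - x| / (x / 2) := div_le_div_of_nonneg_left (abs_nonneg _) (by positivity) hy
    _ = 2 * |y - x| / x := by field_simp

theorem exists_abs_sqrt_div_sub_one_le_rpow {x y : ℕ → ℝ} {B c r : ℝ} (hc : 0 < c) (hr : 0 < r)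
    (hxy : ∀ᶠ n : ℕ in atTop, |y n - x n| ≤ B) (hx : ∀ᶠ n : ℕ in atTop, c * (n : ℝ) ^ r ≤ x n) :
    ∃ C, 0 < C ∧ ∀ᶠ n : ℕ in atTop, |√(x n / y n) - 1| ≤ C * (n : ℝ) ^ (-r) := by
  have hB : 0 ≤ B := let ⟨_, hn⟩ := hxy.exists; (abs_nonneg _).trans hn
  have hlarge : ∀ᶠ n : ℕ in atTop, 2 * B ≤ c * (n : ℝ) ^ r :=
    have hgrow := (tendsto_rpow_atTop hr).comp tendsto_natCast_atTop_atTop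
    (hgrow.const_mul_atTop hc).eventually_ge_atTop _
  refine ⟨2 * B / c + 1, by positivity, ?_⟩
  filter_upwards [hxy, hx, hlarge, eventually_gt_atTop 0] with n hyx hcx hBc hn
  have hnr : 0 < (n : ℝ) ^ r := rpow_pos_of_pos (Nat.cast_pos.2 hn) r
  have hx0 : 0 < x n := by nlinarith
  calc |√(x n / y n) - 1| ≤ 2 * |y n - x n| / x n := abs_sqrt_div_sub_one_le hx0 (by linarith)
    _ ≤ 2 * B / (c * (n : ℝ) ^ r) := by gcongr
    _ = 2 * B / c * (n : ℝ) ^ (-r) := by rw [rpow_neg (Nat.cast_nonneg n)]; field_simp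
    _ ≤ (2 * B / c + 1) * (n : ℝ) ^ (-r) := by gcongr; linarith

/-- For `p ∈ [0,1/2)`, `â_n/ŝ_n = √(1-2p) n^{-1/2} (1 + O(n^{2p-1}))`. -/
theorem stmt6 (p : ℝ) (hp0 : 0 ≤ p) (hp1 : p < 1 / 2) (a : ℕ → ℝ) (s : ℕ → ℝ)
    (ha1 : a 1 = 1)
    (ha : ∀ n : ℕ, 2 ≤ n → a n = Real.Gamma n * Real.Gamma (1 + p) / Real.Gamma (n + p))
    (hs : ∀ n : ℕ, s n = Real.sqrt (∑ k ∈ Finset.Icc 1 n, (a k) ^ 2)) :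
    ∃ C : ℝ, 0 < C ∧ ∀ᶠ n : ℕ in atTop,
      |a n / s n / (Real.sqrt (1 - 2 * p) * (n : ℝ) ^ (-(1:ℝ)/2)) - 1|
        ≤ C * (n : ℝ) ^ (2 * p - 1) := by
  have hgamma : ∀ n : ℕ, 1 ≤ n → a n = Gamma n * Gamma (1 + p) / Gamma (n + p) := by
    intro n hn
    rcases hn.eq_or_lt with rfl | hn
    · rw [ha1, Nat.cast_one, Gamma_one, one_mul, add_comm,
        div_self (Gamma_pos_of_pos (by linarith)).ne']
    · exact ha n hn
  have hrec : ∀ n : ℕ, 1 ≤ n → a (n + 1) = a n * (n / (n + p)) := fun n hn => by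
    have : (0 : ℝ) < n := by exact_mod_cast hn
    rw [hgamma (n + 1) (by omega), hgamma n hn, Nat.cast_succ,
      Gamma_ratio_add_one this (by linarith)]
  obtain ⟨C, hC, hasymp⟩ := exists_abs_sqrt_div_sub_one_le_rpow
    (x := fun n => n * a n ^ 2) (y := fun n => (1 - 2 * p) * ∑ k ∈ Icc 1 n, a k ^ 2)
    (pow_pos (Gamma_pos_of_pos (by linarith : 0 < 1 + p)) 2)
    (sub_pos.2 (by linarith) : 0 < 1 - 2 * p)
    ((eventually_ge_atTop 1).mono fun n hn => abs_one_sub_two_mul_sum_sq_sub_le hp0 ha1 hrec hn)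
    ((eventually_ge_atTop 1).mono fun n hn => by
      rw [hgamma n hn]
      exact Gamma_one_add_sq_mul_rpow_le (by exact_mod_cast hn) hp0 (by linarith))
  refine ⟨C, hC, ?_⟩
  filter_upwards [hasymp, eventually_ge_atTop 1] with n hn hn1
  rw [hs n, div_sqrt_div_mul_rpow_neg_half (pos_of_succ_eq_mul hp0 ha1 hrec hn1).le
    (by linarith) (by exact_mod_cast hn1)]
  rwa [neg_sub] at hn
end

section
/- Let p = 1/2, â_n = Γ(n)Γ(3/2)/Γ(n+1/2), and ŝ_n² = Σ_{k=1}^n â_k². Then â_n/ŝ_n = (n log n)^{−1/2}·(1 + O((log n)^{−1})) as n → ∞. -/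
/-!
Log-convexity of `Γ` (through Hölder's inequality on Euler's integral) gives the Gautschi-type
bounds `1 ≤ x (Γ x / Γ (x + 1/2))² ≤ 1 + 1/(2x)`, so `â_n² = Γ(3/2)² (1/n + O(n⁻²))`.
Summing against `log n ≤ H_n ≤ 1 + log n` gives `ŝ_n² = Γ(3/2)² (log n + O(1))`; hence
`n log n · â_n² / ŝ_n² = 1 + O(1 / log n)`, and taking square roots does not increase the error.
-/

open Filter Real

namespace Real

theorem Gamma_sq_le_Gamma_sub_mul_Gamma_add {x h : ℝ} (hsub : 0 < x - h) (hadd : 0 < x + h) :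
    Gamma x ^ 2 ≤ Gamma (x - h) * Gamma (x + h) := by
  have hmid : Gamma x ≤ √(Gamma (x - h)) * √(Gamma (x + h)) := by
    simpa only [sqrt_eq_rpow, show 1 / 2 * (x - h) + 1 / 2 * (x + h) = x by ring] using
      Gamma_mul_add_mul_le_rpow_Gamma_mul_rpow_Gamma hsub hadd one_half_pos one_half_pos
        (add_halves 1)
  rwa [← sqrt_mul (Gamma_pos_of_pos hsub).le, le_sqrt' (Gamma_pos_of_pos (by linarith))] at hmid

theorem Gamma_add_half_sq_le {x : ℝ} (hx : 0 < x) :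
    Gamma (x + 1 / 2) ^ 2 ≤ x * Gamma x ^ 2 := by
  have h := Gamma_sq_le_Gamma_sub_mul_Gamma_add (x := x + 1 / 2) (h := 1 / 2) (by linarith)
    (by linarith)
  rw [add_sub_cancel_right, add_assoc, add_halves, Gamma_add_one hx.ne'] at h
  linarith

theorem sq_mul_Gamma_sq_le {x : ℝ} (hx : 0 < x) :
    x ^ 2 * Gamma x ^ 2 ≤ (x + 1 / 2) * Gamma (x + 1 / 2) ^ 2 := by
  have h := Gamma_sq_le_Gamma_sub_mul_Gamma_add (x := x + 1) (h := 1 / 2) (by linarith)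
    (by linarith)
  rw [show x + 1 - 1 / 2 = x + 1 / 2 by ring, show x + 1 + 1 / 2 = x + 1 / 2 + 1 by ring,
    Gamma_add_one hx.ne', Gamma_add_one (by positivity)] at h
  linarith

theorem one_le_mul_Gamma_div_Gamma_add_half_sq {x : ℝ} (hx : 0 < x) :
    1 ≤ x * (Gamma x / Gamma (x + 1 / 2)) ^ 2 := by
  have hpos := Gamma_pos_of_pos (show 0 < x + 1 / 2 by linarith)
  rw [div_pow, mul_div_assoc', le_div_iff₀ (by positivity), one_mul]
  exact Gamma_add_half_sq_le hx

theorem mul_Gamma_div_Gamma_add_half_sq_le {x : ℝ} (hx : 0 < x) :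
    x * (Gamma x / Gamma (x + 1 / 2)) ^ 2 ≤ 1 + 1 / (2 * x) := by
  have hpos := Gamma_pos_of_pos (show 0 < x + 1 / 2 by linarith)
  rw [div_pow, mul_div_assoc', div_le_iff₀ (by positivity),
    show (1 + 1 / (2 * x)) * Gamma (x + 1 / 2) ^ 2 = (x + 1 / 2) * Gamma (x + 1 / 2) ^ 2 / x by
      field_simp,
    le_div_iff₀ hx]
  nlinarith [sq_mul_Gamma_sq_le hx]

theorem inv_le_Gamma_div_Gamma_add_half_sq {x : ℝ} (hx : 0 < x) :
    x⁻¹ ≤ (Gamma x / Gamma (x + 1 / 2)) ^ 2 := by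
  rw [inv_le_iff_one_le_mul₀ hx, mul_comm]
  exact one_le_mul_Gamma_div_Gamma_add_half_sq hx

theorem Gamma_div_Gamma_add_half_sq_le {x : ℝ} (hx : 0 < x) :
    (Gamma x / Gamma (x + 1 / 2)) ^ 2 ≤ x⁻¹ + (x ^ 2)⁻¹ := by
  have h := mul_Gamma_div_Gamma_add_half_sq_le hx
  rw [← le_div_iff₀' hx] at h
  refine h.trans (le_of_sub_nonneg ?_)
  field_simp
  linarith

end Real

theorem sum_Icc_inv_sq_le_two (n : ℕ) : ∑ k ∈ Finset.Icc 1 n, ((k : ℝ) ^ 2)⁻¹ ≤ 2 := by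
  have : Finset.Icc 1 n = Finset.Ioo 0 (n + 1) := by ext; simp only [Finset.mem_Icc, Finset.mem_Ioo]; omega
  simpa [this] using sum_Ioo_inv_sq_le (α := ℝ) 0 (n + 1)

theorem log_le_sum_Icc_of_inv_le {f : ℕ → ℝ} (hf : ∀ k : ℕ, 1 ≤ k → (k : ℝ)⁻¹ ≤ f k) (n : ℕ) :
    log n ≤ ∑ k ∈ Finset.Icc 1 n, f k :=
  calc log n ≤ log (n + 1 : ℕ) := by
        rcases n.eq_zero_or_pos with rfl | hn
        · simp
        · exact log_le_log (by positivity) (by push_cast; linarith)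
    _ ≤ harmonic n := log_add_one_le_harmonic n
    _ = ∑ k ∈ Finset.Icc 1 n, (k : ℝ)⁻¹ := by simp [harmonic_eq_sum_Icc]
    _ ≤ _ := Finset.sum_le_sum fun k hk => hf k (Finset.mem_Icc.1 hk).1

theorem sum_Icc_le_log_add_three {f : ℕ → ℝ}
    (hf : ∀ k : ℕ, 1 ≤ k → f k ≤ (k : ℝ)⁻¹ + ((k : ℝ) ^ 2)⁻¹) (n : ℕ) :
    ∑ k ∈ Finset.Icc 1 n, f k ≤ log n + 3 :=
  calc ∑ k ∈ Finset.Icc 1 n, f k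
      ≤ ∑ k ∈ Finset.Icc 1 n, ((k : ℝ)⁻¹ + ((k : ℝ) ^ 2)⁻¹) :=
        Finset.sum_le_sum fun k hk => hf k (Finset.mem_Icc.1 hk).1
    _ = harmonic n + ∑ k ∈ Finset.Icc 1 n, ((k : ℝ) ^ 2)⁻¹ := by
        simp [harmonic_eq_sum_Icc, Finset.sum_add_distrib]
    _ ≤ (1 + log n) + 2 := add_le_add (harmonic_le_one_add_log n) (sum_Icc_inv_sq_le_two n)
    _ = log n + 3 := by ring

theorem abs_sqrt_sub_one_le_abs_sub_one {r : ℝ} (hr : 0 ≤ r) : |√r - 1| ≤ |r - 1| := by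
  have h : r - 1 = (√r - 1) * (√r + 1) := by nlinarith [sq_sqrt hr]
  rw [h, abs_mul]
  exact le_mul_of_one_le_right (abs_nonneg _) (by
    rw [abs_of_pos (by positivity)]; linarith [sqrt_nonneg r])

theorem abs_sqrt_mul_div_sub_one_le {u v L : ℝ} (hL : 0 < L) (hu : 1 ≤ u) (hu' : u ≤ 1 + 1 / L)
    (hv : L ≤ v) (hv' : v ≤ L + 3) : |√(u * L / v) - 1| ≤ 3 / L := by
  have hv0 : 0 < v := hL.trans_le hv
  refine (abs_sqrt_sub_one_le_abs_sub_one (by positivity)).trans (abs_le.2 ⟨?_, ?_⟩)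
  · have : L / (L + 3) ≤ u * L / v :=
      div_le_div₀ (by positivity) (le_mul_of_one_le_left hL.le hu) hv0 hv'
    have : 1 - 3 / L ≤ L / (L + 3) := by
      rw [le_div_iff₀ (by positivity)]; field_simp; nlinarith
    linarith
  · have : u * L / v ≤ u := by
      rw [div_le_iff₀ hv0]; exact mul_le_mul_of_nonneg_left hv (by linarith)
    have : 1 / L ≤ 3 / L := by gcongr; norm_num
    linarith

theorem abs_Gamma_ratio_div_sqrt_sum_mul_sqrt_sub_one_le {n : ℕ} (hn : 2 ≤ n) :
    |Gamma n / Gamma (n + 1 / 2) / √(∑ k ∈ Finset.Icc 1 n, (Gamma k / Gamma (k + 1 / 2)) ^ 2) *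
        √(n * log n) - 1| ≤ 3 / log n := by
  set g : ℕ → ℝ := fun k => Gamma k / Gamma (k + 1 / 2)
  set V := ∑ k ∈ Finset.Icc 1 n, g k ^ 2
  have hn0 : (0 : ℝ) < n := by positivity
  have hL : 0 < log n := log_pos (by exact_mod_cast hn)
  have hgn : 0 < g n := div_pos (Gamma_pos_of_pos hn0) (Gamma_pos_of_pos (by positivity))
  have hV : log n ≤ V := log_le_sum_Icc_of_inv_le
    (fun k hk => inv_le_Gamma_div_Gamma_add_half_sq (by positivity)) n
  have hV' : V ≤ log n + 3 := sum_Icc_le_log_add_three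
    (fun k hk => Gamma_div_Gamma_add_half_sq_le (by positivity)) n
  have hsqrt : g n / √V * √(n * log n) = √(n * g n ^ 2 * log n / V) := by
    rw [sqrt_div' _ (hL.trans_le hV).le, show n * g n ^ 2 * log n = g n ^ 2 * (n * log n) by ring,
      sqrt_mul (sq_nonneg _), sqrt_sq hgn.le]
    ring
  rw [hsqrt]
  refine abs_sqrt_mul_div_sub_one_le hL (one_le_mul_Gamma_div_Gamma_add_half_sq hn0)
    ((mul_Gamma_div_Gamma_add_half_sq_le hn0).trans ?_) hV hV'
  gcongr
  linarith [log_le_sub_one_of_pos hn0]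

/-- For `p = 1/2`, `â_n/ŝ_n = (n log n)^{-1/2} (1 + O((log n)⁻¹))`. -/
theorem stmt7 (a : ℕ → ℝ) (s : ℕ → ℝ)
    (ha1 : a 1 = 1)
    (ha : ∀ n : ℕ, 2 ≤ n →
      a n = Real.Gamma n * Real.Gamma (3 / 2) / Real.Gamma (n + 1 / 2))
    (hs : ∀ n : ℕ, s n = Real.sqrt (∑ k ∈ Finset.Icc 1 n, (a k) ^ 2)) :
    ∃ C : ℝ, 0 < C ∧ ∀ᶠ n : ℕ in atTop,
      |a n / s n * Real.sqrt ((n : ℝ) * Real.log n) - 1| ≤ C / Real.log n := by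
  have hc : 0 < Gamma (3 / 2) := Gamma_pos_of_pos (by norm_num)
  have ha' : ∀ k : ℕ, 1 ≤ k → a k = Gamma (3 / 2) * (Gamma k / Gamma (k + 1 / 2)) := by
    intro k hk
    rcases hk.eq_or_lt with rfl | hk
    · norm_num [ha1, hc.ne']
    · rw [ha k hk]; ring
  refine ⟨3, by norm_num, ?_⟩
  filter_upwards [eventually_ge_atTop 2] with n hn
  have hratio : a n / s n = Gamma n / Gamma (n + 1 / 2) /
      √(∑ k ∈ Finset.Icc 1 n, (Gamma k / Gamma (k + 1 / 2)) ^ 2) := by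
    rw [hs, Finset.sum_congr rfl fun k hk => by rw [ha' k (Finset.mem_Icc.1 hk).1, mul_pow],
      ← Finset.mul_sum, sqrt_mul (by positivity), sqrt_sq hc.le, ha' n (by omega),
      mul_div_mul_left _ _ hc.ne']
  rw [hratio]
  exact abs_Gamma_ratio_div_sqrt_sum_mul_sqrt_sub_one_le hn
end

section
/- Let p ∈ [0,1), ǎ_n = Γ(n)Γ(1−p)/Γ(n−p) (with ǎ_1 = 1), and š_n² = Σ_{k=1}^n ǎ_k². Then ǎ_n/š_n = √(1+2p)·n^{−1/2}·(1 + O(n^{−1})) as n → ∞. -/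
/-!
Put `A_n = ǎ_n²` and `S_n = A_1 + ⋯ + A_n`. The functional equation of `Γ` gives the recurrence
`ǎ_{n+1} (n - p) = ǎ_n n`, and from it one checks by induction the two-sided bound
`n A_n ≤ (1 + 2p) S_n ≤ (n + 1 + 2p) A_n`. Hence `x_n = n A_n / ((1 + 2p) S_n)` lies in
`[n / (n + 1 + 2p), 1]`, and `ǎ_n / (š_n √(1 + 2p) n^{-1/2}) = √x_n` differs from `1` by at most
`1 - x_n ≤ (1 + 2p) / n`.
-/

open Filter Real

theorem Real.Gamma_add_one_div_Gamma_add_one_sub_mul {x p : ℝ} (hx : x ≠ 0) (hxp : x - p ≠ 0) :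
    Gamma (x + 1) / Gamma (x + 1 - p) * (x - p) = Gamma x / Gamma (x - p) * x := by
  rw [Gamma_add_one hx, show x + 1 - p = x - p + 1 by ring, Gamma_add_one hxp, mul_div_mul_comm]
  field_simp

/-- The sequence `ǎ_n` of the paper. -/
noncomputable def gammaRatio (p : ℝ) (n : ℕ) : ℝ :=
  Gamma n * Gamma (1 - p) / Gamma (n - p)

section gammaRatio

variable {p : ℝ}

theorem gammaRatio_one (hp : p < 1) : gammaRatio p 1 = 1 := by
  have : Gamma (1 - p) ≠ 0 := (Gamma_pos_of_pos (by linarith)).ne'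
  simp [gammaRatio, this]

theorem gammaRatio_pos (hp : p < 1) {n : ℕ} (hn : 1 ≤ n) : 0 < gammaRatio p n := by
  have hn : (1 : ℝ) ≤ n := by exact_mod_cast hn
  unfold gammaRatio
  have := Gamma_pos_of_pos (show (0 : ℝ) < n by linarith)
  have := Gamma_pos_of_pos (show 0 < 1 - p by linarith)
  have := Gamma_pos_of_pos (show 0 < (n : ℝ) - p by linarith)
  positivity

theorem gammaRatio_succ_mul (hp : p < 1) {n : ℕ} (hn : 1 ≤ n) :
    gammaRatio p (n + 1) * (n - p) = gammaRatio p n * n := by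
  have hn : (1 : ℝ) ≤ n := by exact_mod_cast hn
  have key := Gamma_add_one_div_Gamma_add_one_sub_mul (x := n) (p := p) (by positivity)
    (by linarith)
  unfold gammaRatio
  push_cast
  rw [mul_div_right_comm, mul_right_comm, key, mul_div_right_comm]
  ring

end gammaRatio

section SquareSums

variable {p q A B : ℝ}

theorem succ_mul_le_of_mul_sq_eq (hq : 0 ≤ q) (hpq : p < q) (hA : 0 ≤ A)
    (hrec : B * (q - p) ^ 2 = A * q ^ 2) :
    (q + 1) * B ≤ q * A + (1 + 2 * p) * B := by
  have : (q - 2 * p) * B * (q - p) ^ 2 ≤ q * A * (q - p) ^ 2 := by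
    rw [mul_assoc, hrec]
    nlinarith [mul_nonneg (mul_nonneg hq hA) (sq_nonneg p)]
  nlinarith [le_of_mul_le_mul_right this (by nlinarith : 0 < (q - p) ^ 2)]

theorem add_mul_le_succ_mul_of_mul_sq_eq (hp0 : 0 ≤ p) (hp1 : p ≤ 1) (hq : 1 ≤ q) (hpq : p < q)
    (hA : 0 ≤ A) (hrec : B * (q - p) ^ 2 = A * q ^ 2) :
    (q + 1 + 2 * p) * A ≤ (q + 1) * B := by
  have : (q + 1 + 2 * p) * A * (q - p) ^ 2 ≤ (q + 1) * B * (q - p) ^ 2 := by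
    rw [mul_assoc (q + 1), hrec]
    -- the difference of the two sides is `A p (3p (q - 1) + 2 (q - p²) + 2p)`
    nlinarith [mul_nonneg (mul_nonneg hA hp0)
      (by nlinarith : 0 ≤ 3 * p * (q - 1) + 2 * (q - p ^ 2) + 2 * p)]
  exact le_of_mul_le_mul_right this (by nlinarith)

theorem mul_le_sum_Icc_le_of_mul_sq_eq {A : ℕ → ℝ} (hp0 : 0 ≤ p) (hp1 : p < 1)
    (hA : ∀ n, 0 ≤ A n) (hrec : ∀ n : ℕ, 1 ≤ n → A (n + 1) * (n - p) ^ 2 = A n * n ^ 2)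
    {n : ℕ} (hn : 1 ≤ n) :
    n * A n ≤ (1 + 2 * p) * ∑ k ∈ Finset.Icc 1 n, A k ∧
      (1 + 2 * p) * ∑ k ∈ Finset.Icc 1 n, A k ≤ (n + 1 + 2 * p) * A n := by
  induction n, hn using Nat.le_induction with
  | base =>
    have := hA 1
    simp only [Finset.Icc_self, Finset.sum_singleton, Nat.cast_one]
    constructor <;> nlinarith
  | succ n hn ih =>
    have hq : (1 : ℝ) ≤ n := by exact_mod_cast hn
    have h1 := succ_mul_le_of_mul_sq_eq (by linarith) (by linarith) (hA n) (hrec n hn)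
    have h2 := add_mul_le_succ_mul_of_mul_sq_eq hp0 hp1.le hq (by linarith) (hA n) (hrec n hn)
    rw [Finset.sum_Icc_succ_top (by omega)]
    push_cast
    constructor <;> linarith [ih.1, ih.2]

end SquareSums

theorem abs_sqrt_sub_one_le_s8 {x : ℝ} (hx : x ≤ 1) : |√x - 1| ≤ 1 - x := by
  rw [abs_of_nonpos (by simpa using hx)]
  linarith [le_sqrt_self_iff.mpr hx]

theorem abs_sqrt_mul_div_sub_one_le_s8 {q c A S : ℝ} (hq : 0 < q) (hc : 0 < c) (hA : 0 < A)
    (hlow : q * A ≤ c * S) (hup : c * S ≤ (q + c) * A) :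
    |√(q * A / (c * S)) - 1| ≤ c / q := by
  have hS : 0 < c * S := by nlinarith
  refine (abs_sqrt_sub_one_le_s8 ((div_le_one hS).mpr hlow)).trans ?_
  rw [one_sub_div hS.ne', div_le_div_iff₀ hS hq]
  nlinarith

/-- For `p ∈ [0,1)`, `ǎ_n/š_n = √(1+2p) n^{-1/2} (1 + O(n⁻¹))`. -/
theorem stmt8 (p : ℝ) (hp0 : 0 ≤ p) (hp1 : p < 1) (a : ℕ → ℝ) (s : ℕ → ℝ)
    (ha1 : a 1 = 1)
    (ha : ∀ n : ℕ, 2 ≤ n → a n = Real.Gamma n * Real.Gamma (1 - p) / Real.Gamma (n - p))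
    (hs : ∀ n : ℕ, s n = Real.sqrt (∑ k ∈ Finset.Icc 1 n, (a k) ^ 2)) :
    ∃ C : ℝ, 0 < C ∧ ∀ᶠ n : ℕ in atTop,
      |a n / s n / (Real.sqrt (1 + 2 * p) * (n : ℝ) ^ (-(1:ℝ)/2)) - 1| ≤ C / n := by
  have ha' : ∀ n, 1 ≤ n → a n = gammaRatio p n := fun n hn => by
    obtain rfl | hn := hn.eq_or_lt
    · rw [ha1, gammaRatio_one hp1]
    · exact ha n hn
  have hrec : ∀ n : ℕ, 1 ≤ n → a (n + 1) ^ 2 * (n - p) ^ 2 = a n ^ 2 * n ^ 2 := fun n hn => by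
    rw [← mul_pow, ← mul_pow, ha' n hn, ha' (n + 1) (by omega), gammaRatio_succ_mul hp1 hn]
  refine ⟨1 + 2 * p, by linarith, ?_⟩
  filter_upwards [eventually_ge_atTop 1] with n hn
  have hpos : 0 < a n := ha' n hn ▸ gammaRatio_pos hp1 hn
  obtain ⟨hlow, hup⟩ :=
    mul_le_sum_Icc_le_of_mul_sq_eq hp0 hp1 (fun n => sq_nonneg (a n)) hrec hn
  have hsn := hs n
  set S := ∑ k ∈ Finset.Icc 1 n, a k ^ 2
  have hq : (0 : ℝ) < n := by exact_mod_cast hn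
  have hc : 0 < 1 + 2 * p := by linarith
  have hratio : a n / s n / (√(1 + 2 * p) * (n : ℝ) ^ (-(1:ℝ)/2))
      = √(n * a n ^ 2 / ((1 + 2 * p) * S)) := by
    rw [hsn, show (-(1:ℝ)/2) = -(1/2) by ring, rpow_neg hq.le, ← sqrt_eq_rpow,
      sqrt_div (by positivity), sqrt_mul hq.le, sqrt_sq hpos.le, sqrt_mul hc.le]
    field_simp
  rw [hratio]
  exact abs_sqrt_mul_div_sub_one_le_s8 hq hc (by positivity) hlow (by linarith)
end

section
/- Let p ∈ [0,1/2), â_n = Γ(n)Γ(1+p)/Γ(n+p), ŝ_n² = Σ_{k=1}^n â_k². Then the sequence (1−2p)ŝ_n² − n·â_n² is bounded; more precisely (1−2p)ŝ_n² − n·â_n² = −2p + Σ_{k=2}^n p²(k−1)/(k−1+p)² · â_{k−1}², which is O(1) as n → ∞. -/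
open Filter Real

/-!
Writing `â_{n+1} = â_n n/(n+p)`, one step of `(1-2p)ŝ_n² - n â_n²` adds exactly
`p² n/(n+p)² â_n²`, which gives the identity by induction. Each such increment is at most
`(p/2)(â_n² - â_{n+1}²)`, so the correction sum telescopes to at most `p/2`, and the sequence
stays in `[-2p, 0]`.
-/

lemma gamma_ratio_add_one {x p : ℝ} (c : ℝ) (hx : x ≠ 0) (hxp : x + p ≠ 0) :
    Gamma (x + 1) * c / Gamma (x + 1 + p) = Gamma x * c / Gamma (x + p) * x / (x + p) := by
  rw [Gamma_add_one hx, add_right_comm, Gamma_add_one hxp]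
  simp only [div_eq_mul_inv, mul_inv]
  ring

lemma succ_eq_of_gamma_ratio {p : ℝ} (hp : -1 < p) {a : ℕ → ℝ} (ha1 : a 1 = 1)
    (ha : ∀ n : ℕ, 2 ≤ n → a n = Gamma n * Gamma (1 + p) / Gamma (n + p))
    {n : ℕ} (hn : 1 ≤ n) : a (n + 1) = a n * n / (n + p) := by
  have hn' : (1 : ℝ) ≤ n := by exact_mod_cast hn
  have ha' : a n = Gamma n * Gamma (1 + p) / Gamma (n + p) := by
    rcases hn.eq_or_lt with rfl | h
    · have : Gamma (1 + p) ≠ 0 := (Gamma_pos_of_pos (by linarith)).ne'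
      simp [ha1, this]
    · exact ha n h
  rw [ha (n + 1) (by omega), ha', Nat.cast_succ]
  exact gamma_ratio_add_one _ (by positivity) (by linarith)

section Recurrence

variable {p : ℝ} {a : ℕ → ℝ}

lemma sq_step_identity {x c : ℝ} (hxp : x + p ≠ 0) :
    (1 - 2 * p) * (c * x / (x + p)) ^ 2 - (x + 1) * (c * x / (x + p)) ^ 2 + x * c ^ 2
      = p ^ 2 * x / (x + p) ^ 2 * c ^ 2 := by
  field_simp
  ring

lemma sq_step_le {x c : ℝ} (hp : 0 ≤ p) (hxp : x + p ≠ 0) :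
    p ^ 2 * x / (x + p) ^ 2 * c ^ 2 ≤ p / 2 * (c ^ 2 - (c * x / (x + p)) ^ 2) := by
  have h : p / 2 * (c ^ 2 - (c * x / (x + p)) ^ 2)
      = p ^ 2 * x / (x + p) ^ 2 * c ^ 2 + c ^ 2 * p ^ 3 / (2 * (x + p) ^ 2) := by
    field_simp
    ring
  rw [h]
  have : 0 ≤ c ^ 2 * p ^ 3 / (2 * (x + p) ^ 2) := by positivity
  linarith

noncomputable def correctionSum (p : ℝ) (a : ℕ → ℝ) (n : ℕ) : ℝ :=
  ∑ k ∈ Finset.Icc 2 n, p ^ 2 * ((k : ℝ) - 1) / ((k : ℝ) - 1 + p) ^ 2 * (a (k - 1)) ^ 2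

lemma correctionSum_succ {n : ℕ} (hn : 1 ≤ n) :
    correctionSum p a (n + 1) = correctionSum p a n + p ^ 2 * n / (n + p) ^ 2 * (a n) ^ 2 := by
  rw [correctionSum, Finset.sum_Icc_succ_top (by omega), Nat.cast_succ, add_sub_cancel_right,
    Nat.add_sub_cancel, correctionSum]

lemma correctionSum_nonneg (n : ℕ) : 0 ≤ correctionSum p a n := by
  refine Finset.sum_nonneg fun k hk => ?_
  have : (2 : ℝ) ≤ k := by exact_mod_cast (Finset.mem_Icc.mp hk).1
  have : (0 : ℝ) ≤ k - 1 := by linarith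
  positivity

variable (ha1 : a 1 = 1) (hrec : ∀ n : ℕ, 1 ≤ n → a (n + 1) = a n * n / (n + p))
include ha1 hrec

lemma sub_mul_sq_eq_correctionSum (hp : -1 < p) {n : ℕ} (hn : 1 ≤ n) :
    (1 - 2 * p) * ∑ k ∈ Finset.Icc 1 n, (a k) ^ 2 - n * (a n) ^ 2
      = -2 * p + correctionSum p a n := by
  induction n, hn using Nat.le_induction with
  | base => simp [ha1, correctionSum]
  | succ n hn ih =>
    have hnp : (n : ℝ) + p ≠ 0 := by
      have : (1 : ℝ) ≤ n := by exact_mod_cast hn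
      linarith
    rw [Finset.sum_Icc_succ_top (by omega), correctionSum_succ hn, hrec n hn, Nat.cast_succ]
    linear_combination ih + sq_step_identity (c := a n) hnp

lemma correctionSum_le (hp0 : 0 ≤ p) {n : ℕ} (hn : 1 ≤ n) :
    correctionSum p a n ≤ p / 2 * (1 - (a n) ^ 2) := by
  induction n, hn using Nat.le_induction with
  | base => simp [ha1, correctionSum]
  | succ n hn ih =>
    have hnp : (n : ℝ) + p ≠ 0 := by
      have : (1 : ℝ) ≤ n := by exact_mod_cast hn
      linarith
    have step := sq_step_le (c := a n) hp0 hnp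
    rw [correctionSum_succ hn, hrec n hn]
    linarith

end Recurrence

theorem stmt9_general (p : ℝ) (hp0 : 0 ≤ p) (a : ℕ → ℝ) (s2 : ℕ → ℝ)
    (ha1 : a 1 = 1)
    (ha : ∀ n : ℕ, 2 ≤ n → a n = Real.Gamma n * Real.Gamma (1 + p) / Real.Gamma (n + p))
    (hs : ∀ n : ℕ, s2 n = ∑ k ∈ Finset.Icc 1 n, (a k) ^ 2) :
    (∀ n : ℕ, 1 ≤ n →
      (1 - 2 * p) * s2 n - n * (a n) ^ 2
        = -2 * p + ∑ k ∈ Finset.Icc 2 n,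
            p ^ 2 * ((k : ℝ) - 1) / ((k : ℝ) - 1 + p) ^ 2 * (a (k - 1)) ^ 2) ∧
    (∃ C : ℝ, 0 < C ∧ ∀ n : ℕ, |(1 - 2 * p) * s2 n - n * (a n) ^ 2| ≤ C) := by
  have hp : -1 < p := by linarith
  have hrec := fun n (hn : 1 ≤ n) => succ_eq_of_gamma_ratio hp ha1 ha hn
  have key := fun n (hn : 1 ≤ n) => hs n ▸ sub_mul_sq_eq_correctionSum ha1 hrec hp hn
  refine ⟨key, 2 * p + 1, by linarith, fun n => ?_⟩
  rcases Nat.eq_zero_or_pos n with rfl | hn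
  · simpa [hs 0] using (by linarith : (0 : ℝ) ≤ 2 * p + 1)
  · have hle := correctionSum_le ha1 hrec hp0 hn
    have hnonneg : 0 ≤ correctionSum p a n := correctionSum_nonneg n
    have : 0 ≤ p * (a n) ^ 2 := by positivity
    rw [key n hn, abs_le]
    constructor <;> linarith

/-- For `p ∈ [0,1/2)`, the sequence `(1-2p)ŝ_n² - n â_n²` equals
`-2p + Σ_{k=2}^n p²(k-1)/(k-1+p)² â_{k-1}²` and is bounded. -/
theorem stmt9 (p : ℝ) (hp0 : 0 ≤ p) (hp1 : p < 1 / 2) (a : ℕ → ℝ) (s2 : ℕ → ℝ)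
    (ha1 : a 1 = 1)
    (ha : ∀ n : ℕ, 2 ≤ n → a n = Real.Gamma n * Real.Gamma (1 + p) / Real.Gamma (n + p))
    (hs : ∀ n : ℕ, s2 n = ∑ k ∈ Finset.Icc 1 n, (a k) ^ 2) :
    (∀ n : ℕ, 1 ≤ n →
      (1 - 2 * p) * s2 n - n * (a n) ^ 2
        = -2 * p + ∑ k ∈ Finset.Icc 2 n,
            p ^ 2 * ((k : ℝ) - 1) / ((k : ℝ) - 1 + p) ^ 2 * (a (k - 1)) ^ 2) ∧
    (∃ C : ℝ, 0 < C ∧ ∀ n : ℕ, |(1 - 2 * p) * s2 n - n * (a n) ^ 2| ≤ C) :=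
  stmt9_general p hp0 a s2 ha1 ha hs
end

section
/- Assume that for every f ∈ C_e(ℝ) and every fixed A > 0, almost surely (1/log b_n) ∫_A^{b_n} (1/t) f(W(t)/√t) dt → E f(Z), and that (b_n) is increasing with b_n → ∞ and b_{n−1}/b_n → 1. Then for every f ∈ C_e(ℝ), almost surely T_n(f,W) := (1/log b_n) Σ_{k=2}^n ∫_{b_{k−1}}^{b_k} (1/b_k) f(W(t)/√t) dt → E f(Z). -/
/-!
On `[b_{k-1}, b_k]` the weight `1 / b_k` differs from `1 / t` by at most `d_k / t` with
`d_k = 1 - b_{k-1} / b_k`, so each block of `T_n(f, W)` differs from the corresponding block of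
`∫_{b_1}^{b_n} t⁻¹ f(W(t)/√t) dt` by at most `d_k ∫ t⁻¹ |f(W(t)/√t)| dt`. As `d_k → 0` and the
hypothesis applied to `|f|` keeps the logarithmic average of these integrals bounded, the total
error is `o(log b_n)`, and the blocks of the integral telescope to the hypothesis with `A = b_1`.
-/

open MeasureTheory ProbabilityTheory Filter Real Set

/-- A standard one-dimensional Brownian motion on `[0, ∞)` (extended to `ℝ` by
ignoring negative times): a.s. starts at `0`, a.s. has continuous paths,
has Gaussian increments `W t - W s ~ N(0, t - s)` for `0 ≤ s ≤ t`, and has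
independent increments over disjoint ordered time intervals. -/
structure IsStandardBM {Ω : Type} [MeasurableSpace Ω] (P : Measure Ω) (W : ℝ → Ω → ℝ) : Prop where
  meas : ∀ t, Measurable (W t)
  init : ∀ᵐ ω ∂P, W 0 ω = 0
  cont : ∀ᵐ ω ∂P, Continuous fun t => W t ω
  gauss : ∀ s t : ℝ, 0 ≤ s → s ≤ t →
    P.map (fun ω => W t ω - W s ω) = gaussianReal 0 ((t - s).toNNReal)
  indep : ∀ (n : ℕ) (t : ℕ → ℝ), Monotone t → 0 ≤ t 0 →
    iIndepFun
      (fun i : Fin n => fun ω => W (t (i.1 + 1)) ω - W (t i.1) ω) P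

open Finset Topology

theorem tendsto_inv_mul_sum_of_abs_le_mul {e d J L : ℕ → ℝ} {M : ℝ} (s : ℕ → Finset ℕ)
    (hd : Tendsto d atTop (𝓝 0)) (hJ : ∀ k, 0 ≤ J k) (he : ∀ k, |e k| ≤ d k * J k)
    (hL : Tendsto L atTop atTop)
    (hJL : Tendsto (fun n => (L n)⁻¹ * ∑ k ∈ s n, J k) atTop (𝓝 M)) :
    Tendsto (fun n => (L n)⁻¹ * ∑ k ∈ s n, e k) atTop (𝓝 0) := by
  refine Metric.tendsto_nhds.2 fun δ hδ => ?_
  obtain ⟨ε, hε, hεM⟩ : ∃ ε > 0, ε * M < δ := by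
    refine ⟨δ / (|M| + 1), by positivity, ?_⟩
    calc δ / (|M| + 1) * M ≤ δ / (|M| + 1) * |M| := by gcongr; exact le_abs_self M
      _ < δ / (|M| + 1) * (|M| + 1) := by gcongr; linarith
      _ = δ := by field_simp
  obtain ⟨N, hN⟩ := eventually_atTop.1 (hd.eventually (gt_mem_nhds hε))
  set C := ∑ k ∈ range N, |e k|
  have hsum : ∀ n, |∑ k ∈ s n, e k| ≤ C + ε * ∑ k ∈ s n, J k := fun n => by
    rw [← sum_filter_add_sum_filter_not (s n) (· < N)]
    refine (abs_add_le _ _).trans (add_le_add ?_ ?_)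
    · refine (abs_sum_le_sum_abs _ _).trans (sum_le_sum_of_subset_of_nonneg ?_ ?_)
      · exact fun k hk => mem_range.2 (mem_filter.1 hk).2
      · exact fun k _ _ => abs_nonneg _
    · calc |∑ k ∈ s n with ¬k < N, e k| ≤ ∑ k ∈ s n with ¬k < N, ε * J k := by
            refine (abs_sum_le_sum_abs _ _).trans (sum_le_sum fun k hk => ?_)
            have hkN : N ≤ k := not_lt.1 (mem_filter.1 hk).2
            exact (he k).trans (mul_le_mul_of_nonneg_right (hN k hkN).le (hJ k))
        _ ≤ ε * ∑ k ∈ s n, J k := by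
            rw [← mul_sum]
            exact mul_le_mul_of_nonneg_left
              (sum_le_sum_of_subset_of_nonneg (filter_subset _ _) fun k _ _ => hJ k) hε.le
  have hlim : Tendsto (fun n => C * (L n)⁻¹ + ε * ((L n)⁻¹ * ∑ k ∈ s n, J k)) atTop
      (𝓝 (ε * M)) := by
    simpa using (hL.inv_tendsto_atTop.const_mul C).add (hJL.const_mul ε)
  filter_upwards [hL.eventually_gt_atTop 0, hlim.eventually_lt_const hεM] with n hLn hn
  rw [dist_zero_right, norm_mul, norm_inv, Real.norm_of_nonneg hLn.le, Real.norm_eq_abs]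
  calc (L n)⁻¹ * |∑ k ∈ s n, e k| ≤ (L n)⁻¹ * (C + ε * ∑ k ∈ s n, J k) := by
        gcongr; exact hsum n
    _ = C * (L n)⁻¹ + ε * ((L n)⁻¹ * ∑ k ∈ s n, J k) := by ring
    _ < δ := hn

theorem abs_inv_sub_inv_le {a t c : ℝ} (ha : 0 < a) (hat : a ≤ t) (htc : t ≤ c) :
    |1 / c - 1 / t| ≤ (1 - a / c) * (1 / t) := by
  have ht : 0 < t := ha.trans_le hat
  have hc : 0 < c := ht.trans_le htc
  rw [abs_sub_comm, abs_of_nonneg (sub_nonneg.2 (one_div_le_one_div_of_le ht htc))]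
  rw [show 1 / t - 1 / c = (1 - t / c) * (1 / t) by field_simp]
  gcongr

theorem sum_Icc_two_integral_adjacent {f : ℝ → ℝ} {b : ℕ → ℝ} {n : ℕ} (hn : 1 ≤ n)
    (hint : ∀ k, IntervalIntegrable f volume (b k) (b (k + 1))) :
    ∑ k ∈ Icc 2 n, ∫ t in b (k - 1)..b k, f t = ∫ t in b 1..b n, f t := by
  rw [← intervalIntegral.sum_integral_adjacent_intervals_Ico hn fun k _ => hint k,
    ← Finset.Ico_add_one_right_eq_Icc,
    ← sum_Ico_add' (fun k => ∫ t in b (k - 1)..b k, f t) 1 n 1]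
  simp

theorem abs_integral_div_sub_integral_div_le {g : ℝ → ℝ} {a c : ℝ} (ha : 0 < a) (hac : a ≤ c)
    (hg : ContinuousOn g (Icc a c)) :
    |(∫ t in a..c, (1 / c) * g t) - ∫ t in a..c, (1 / t) * g t|
      ≤ (1 - a / c) * ∫ t in a..c, (1 / t) * |g t| := by
  have hg' : ContinuousOn g (uIcc a c) := by rwa [uIcc_of_le hac]
  have hinv : ContinuousOn (fun t : ℝ => 1 / t) (uIcc a c) :=
    continuousOn_const.div continuousOn_id fun t ht =>
      (ha.trans_le (by rw [uIcc_of_le hac] at ht; exact ht.1)).ne'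
  have h₁ : IntervalIntegrable (fun t => (1 / c) * g t) volume a c :=
    (continuousOn_const.mul hg').intervalIntegrable
  have h₂ : IntervalIntegrable (fun t => (1 / t) * g t) volume a c :=
    (hinv.mul hg').intervalIntegrable
  rw [← intervalIntegral.integral_sub h₁ h₂, ← intervalIntegral.integral_const_mul]
  refine (intervalIntegral.abs_integral_le_integral_abs hac).trans
    (intervalIntegral.integral_mono_on hac ?_ ?_ fun t ht => ?_)
  · exact (h₁.sub h₂).abs
  · exact (continuousOn_const.mul (hinv.mul hg'.abs)).intervalIntegrable
  · calc |(1 / c) * g t - (1 / t) * g t| = |1 / c - 1 / t| * |g t| := by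
          rw [← sub_mul, abs_mul]
      _ ≤ (1 - a / c) * (1 / t) * |g t| := by
          gcongr; exact abs_inv_sub_inv_le ha ht.1 ht.2
      _ = (1 - a / c) * ((1 / t) * |g t|) := mul_assoc _ _ _

theorem tendsto_inv_mul_sum_integral_div_right_endpoint {g : ℝ → ℝ} {b L : ℕ → ℝ} {c M : ℝ}
    (hg : ContinuousOn g (Ioi 0)) (hbpos : ∀ n, 0 < b n) (hmono : Monotone b)
    (hratio : Tendsto (fun n => b n / b (n + 1)) atTop (𝓝 1)) (hL : Tendsto L atTop atTop)
    (hc : Tendsto (fun n => (L n)⁻¹ * ∫ t in b 1..b n, (1 / t) * g t) atTop (𝓝 c))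
    (hM : Tendsto (fun n => (L n)⁻¹ * ∫ t in b 1..b n, (1 / t) * |g t|) atTop (𝓝 M)) :
    Tendsto (fun n => (L n)⁻¹ * ∑ k ∈ Icc 2 n, ∫ t in b (k - 1)..b k, (1 / b k) * g t)
      atTop (𝓝 c) := by
  have hpos : ∀ j k, Icc (b j) (b k) ⊆ Ioi 0 := fun j k t ht => (hbpos j).trans_le ht.1
  have hint : ∀ G : ℝ → ℝ, ContinuousOn G (Ioi 0) →
      ∀ k, IntervalIntegrable G volume (b k) (b (k + 1)) := fun _ hG k =>
    (hG.mono (by rw [uIcc_of_le (hmono k.le_succ)]; exact hpos _ _)).intervalIntegrable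
  have hinv : ContinuousOn (fun t : ℝ => 1 / t) (Ioi 0) :=
    continuousOn_const.div continuousOn_id fun t ht => ht.ne'
  have hd : Tendsto (fun k => 1 - b (k - 1) / b k) atTop (𝓝 0) := by
    have h : Tendsto (fun k => b (k - 1) / b k) atTop (𝓝 1) :=
      (tendsto_add_atTop_iff_nat 1).1 (by simpa using hratio)
    simpa using (tendsto_const_nhds (x := (1 : ℝ))).sub h
  have hJ : ∀ k, 0 ≤ ∫ t in b (k - 1)..b k, (1 / t) * |g t| := fun k =>
    intervalIntegral.integral_nonneg (hmono (Nat.sub_le k 1)) fun t ht =>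
      mul_nonneg (one_div_nonneg.2 ((hbpos _).trans_le ht.1).le) (abs_nonneg _)
  have he := tendsto_inv_mul_sum_of_abs_le_mul (fun n => Icc 2 n) hd hJ
    (fun k => abs_integral_div_sub_integral_div_le (hbpos _) (hmono (Nat.sub_le k 1))
      (hg.mono (hpos _ _))) hL
    (hM.congr' (eventually_atTop.2 ⟨1, fun n hn => by
      dsimp only
      rw [sum_Icc_two_integral_adjacent hn (hint (fun t => 1 / t * |g t|) (hinv.mul hg.abs))]⟩))
  rw [← zero_add c]
  refine (he.add hc).congr' (eventually_atTop.2 ⟨1, fun n hn => ?_⟩)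
  rw [← mul_add, sum_sub_distrib,
    sum_Icc_two_integral_adjacent hn (hint (fun t => 1 / t * g t) (hinv.mul hg)), sub_add_cancel]

theorem stmt12_general {Ω : Type} [MeasurableSpace Ω] (P : Measure Ω)
    (W : ℝ → Ω → ℝ) (hW : IsStandardBM P W)
    (b : ℕ → ℝ) (hbpos : ∀ n, 0 < b n) (hmono : StrictMono b)
    (hinf : Tendsto b atTop atTop)
    (hratio : Tendsto (fun n => b n / b (n + 1)) atTop (nhds (1:ℝ)))
    (H : ∀ f : ℝ → ℝ, Continuous f →
      (∃ γ : ℝ, γ < 1 / 2 ∧ ∀ x, |f x| ≤ Real.exp (γ * x ^ 2)) →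
      ∀ A : ℝ, 0 < A →
      ∀ᵐ ω ∂P, Tendsto (fun n =>
          (Real.log (b n))⁻¹ * ∫ t in A..(b n), (1 / t) * f (W t ω / Real.sqrt t))
        atTop (nhds (∫ x, f x ∂(gaussianReal 0 1)))) :
    ∀ f : ℝ → ℝ, Continuous f →
      (∃ γ : ℝ, γ < 1 / 2 ∧ ∀ x, |f x| ≤ Real.exp (γ * x ^ 2)) →
      ∀ᵐ ω ∂P, Tendsto (fun n =>
          (Real.log (b n))⁻¹ * ∑ k ∈ Finset.Icc 2 n,
            ∫ t in (b (k - 1))..(b k), (1 / b k) * f (W t ω / Real.sqrt t))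
        atTop (nhds (∫ x, f x ∂(gaussianReal 0 1))) := by
  rintro f hf ⟨γ, hγ, hfγ⟩
  have habs : ∃ γ : ℝ, γ < 1 / 2 ∧ ∀ x, |(fun y => |f y|) x| ≤ Real.exp (γ * x ^ 2) :=
    ⟨γ, hγ, fun x => by simpa only [abs_abs] using hfγ x⟩
  filter_upwards [hW.cont, H f hf ⟨γ, hγ, hfγ⟩ (b 1) (hbpos 1),
    H _ hf.abs habs (b 1) (hbpos 1)] with ω hcont hc hM
  have hg : ContinuousOn (fun t => f (W t ω / Real.sqrt t)) (Ioi 0) :=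
    hf.comp_continuousOn
      (hcont.continuousOn.div continuous_sqrt.continuousOn fun t ht => (sqrt_pos.2 ht).ne')
  exact tendsto_inv_mul_sum_integral_div_right_endpoint hg hbpos hmono.monotone hratio
    (tendsto_log_atTop.comp hinf) hc hM

/-- From the a.s. logarithmic-average convergence of
`(log b_n)⁻¹ ∫_A^{b_n} t⁻¹ f(W(t)/√t) dt` for every `f ∈ C_e(ℝ)` and `A > 0`,
together with `b_{n-1}/b_n → 1`, deduce the a.s. convergence of the
Riemann-sum average `T_n(f, W)`. -/
theorem stmt12 {Ω : Type} [MeasurableSpace Ω] (P : Measure Ω) [IsProbabilityMeasure P]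
    (W : ℝ → Ω → ℝ) (hW : IsStandardBM P W)
    (b : ℕ → ℝ) (hbpos : ∀ n, 0 < b n) (hmono : StrictMono b)
    (hinf : Tendsto b atTop atTop)
    (hratio : Tendsto (fun n => b n / b (n + 1)) atTop (nhds (1:ℝ)))
    (H : ∀ f : ℝ → ℝ, Continuous f →
      (∃ γ : ℝ, γ < 1 / 2 ∧ ∀ x, |f x| ≤ Real.exp (γ * x ^ 2)) →
      ∀ A : ℝ, 0 < A →
      ∀ᵐ ω ∂P, Tendsto (fun n =>
          (Real.log (b n))⁻¹ * ∫ t in A..(b n), (1 / t) * f (W t ω / Real.sqrt t))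
        atTop (nhds (∫ x, f x ∂(gaussianReal 0 1)))) :
    ∀ f : ℝ → ℝ, Continuous f →
      (∃ γ : ℝ, γ < 1 / 2 ∧ ∀ x, |f x| ≤ Real.exp (γ * x ^ 2)) →
      ∀ᵐ ω ∂P, Tendsto (fun n =>
          (Real.log (b n))⁻¹ * ∑ k ∈ Finset.Icc 2 n,
            ∫ t in (b (k - 1))..(b k), (1 / b k) * f (W t ω / Real.sqrt t))
        atTop (nhds (∫ x, f x ∂(gaussianReal 0 1))) :=
  stmt12_general P W hW b hbpos hmono hinf hratio H
end
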